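/- arXiv:1610.04750 — 4 statements merged into one kernel-verified Lean document; each statement's English description precedes it below -/
import Mathlib

section
/- Let m ≥ 1, ζ = e^{2πi/m}, η = e^{πi/m}, and S_l(x) = (1/(m η^l)) Σ_{j=0}^{m-1} ζ^{lj} e^{η ζ^j x}. Then for any l ∈ {0,...,m-1} and all complex x₁, x₂, S_l(x₁ + x₂) is a finite linear combination Σ_{l₁,l₂=0}^{m-1} c_{l₁,l₂} S_{l₁}(x₁) S_{l₂}(x₂) with complex coefficients c_{l₁,l₂} depending only on m and l. -/
theorem gen_trig_summation_formula (m : ℕ) (hm : 1 ≤ m) (ζ η : ℂ)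
    (hζ : ζ = Complex.exp (2 * Real.pi * Complex.I / m))
    (hη : η = Complex.exp (Real.pi * Complex.I / m))
    (S : ℕ → ℂ → ℂ)
    (hS : ∀ l x, S l x = (1 / (m * η ^ l)) *
      ∑ j ∈ Finset.range m, ζ ^ (l * j) * Complex.exp (η * ζ ^ j * x)) :
    ∀ l < m, ∃ c : Fin m → Fin m → ℂ, ∀ x₁ x₂ : ℂ,
      S l (x₁ + x₂) = ∑ l₁ : Fin m, ∑ l₂ : Fin m,
        c l₁ l₂ * S (l₁ : ℕ) x₁ * S (l₂ : ℕ) x₂ := by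
  have hm0 : (m : ℂ) ≠ 0 := Nat.cast_ne_zero.mpr (by omega)
  have hη0 : η ≠ 0 := by rw [hη]; exact Complex.exp_ne_zero _
  have hprim : IsPrimitiveRoot ζ m := by
    rw [hζ]; exact Complex.isPrimitiveRoot_exp m (by omega)
  have hζm : ζ ^ m = 1 := hprim.pow_eq_one
  have hζ0 : ζ ≠ 0 := hprim.ne_zero (by omega)
  -- geometric sum
  have geo : ∀ w : ℂ, w ^ m = 1 → w ≠ 1 → ∑ i ∈ Finset.range m, w ^ i = 0 := by
    intro w hwm hw1
    rw [geom_sum_eq hw1, hwm]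
    simp
  -- orthogonality
  have orth : ∀ i ∈ Finset.range m, ∀ j ∈ Finset.range m,
      ∑ l₁ ∈ Finset.range m, ζ ^ (l₁ * i) * (ζ ^ (l₁ * j))⁻¹ =
        if i = j then (m : ℂ) else 0 := by
    intro i hi j hj
    simp only [Finset.mem_range] at hi hj
    have hterm : ∀ l₁ : ℕ, ζ ^ (l₁ * i) * (ζ ^ (l₁ * j))⁻¹ = (ζ ^ i * (ζ ^ j)⁻¹) ^ l₁ := by
      intro l₁
      rw [mul_pow, inv_pow, mul_comm l₁ i, mul_comm l₁ j, pow_mul, pow_mul]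
    simp only [hterm]
    by_cases hij : i = j
    · subst hij
      rw [mul_inv_cancel₀ (pow_ne_zero _ hζ0)]
      simp
    · rw [if_neg hij]
      apply geo
      · rw [mul_pow, inv_pow, ← pow_mul, ← pow_mul, mul_comm i m, mul_comm j m,
          pow_mul, pow_mul, hζm, one_pow, one_pow]
        simp
      · intro h
        apply hij
        apply hprim.pow_inj hi hj
        field_simp at h
        exact h
  -- inversion: recover the exponentials from S
  have inv : ∀ j ∈ Finset.range m, ∀ x : ℂ,
      Complex.exp (η * ζ ^ j * x) =
        ∑ l₁ ∈ Finset.range m, η ^ l₁ * (ζ ^ (l₁ * j))⁻¹ * S l₁ x := by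
    intro j hj x
    have : ∀ l₁ ∈ Finset.range m,
        η ^ l₁ * (ζ ^ (l₁ * j))⁻¹ * S l₁ x =
          ∑ i ∈ Finset.range m,
            (1 / (m : ℂ)) * (ζ ^ (l₁ * i) * (ζ ^ (l₁ * j))⁻¹) * Complex.exp (η * ζ ^ i * x) := by
      intro l₁ _
      rw [hS, Finset.mul_sum]
      rw [Finset.mul_sum]
      apply Finset.sum_congr rfl
      intro i _
      have hηl : η ^ l₁ ≠ 0 := pow_ne_zero _ hη0
      field_simp
    rw [Finset.sum_congr rfl this, Finset.sum_comm]
    have : ∀ i ∈ Finset.range m,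
        ∑ l₁ ∈ Finset.range m,
            (1 / (m : ℂ)) * (ζ ^ (l₁ * i) * (ζ ^ (l₁ * j))⁻¹) * Complex.exp (η * ζ ^ i * x) =
          (if i = j then (1 : ℂ) else 0) * Complex.exp (η * ζ ^ i * x) := by
      intro i hi
      rw [← Finset.sum_mul, ← Finset.mul_sum, orth i hi j hj]
      by_cases hij : i = j
      · rw [if_pos hij, if_pos hij, one_div, inv_mul_cancel₀ hm0]
      · rw [if_neg hij, if_neg hij, mul_zero]
    rw [Finset.sum_congr rfl this]
    simp only [ite_mul, one_mul, zero_mul]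
    rw [Finset.sum_ite_eq' (Finset.range m) j (fun i => Complex.exp (η * ζ ^ i * x)), if_pos hj]
  intro l hl
  refine ⟨fun l₁ l₂ => (η ^ (l₁ : ℕ) * η ^ (l₂ : ℕ) / ((m : ℂ) * η ^ l)) *
    ∑ j ∈ Finset.range m, ζ ^ (l * j) * ((ζ ^ ((l₁ : ℕ) * j))⁻¹ * (ζ ^ ((l₂ : ℕ) * j))⁻¹), ?_⟩
  intro x₁ x₂
  rw [Fin.sum_univ_eq_sum_range (fun l₁ => ∑ l₂ : Fin m,
    (η ^ l₁ * η ^ (l₂ : ℕ) / ((m : ℂ) * η ^ l) *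
      ∑ j ∈ Finset.range m, ζ ^ (l * j) * ((ζ ^ (l₁ * j))⁻¹ * (ζ ^ ((l₂ : ℕ) * j))⁻¹)) *
        S l₁ x₁ * S (l₂ : ℕ) x₂)]
  have hR : ∀ l₁ ∈ Finset.range m,
      (∑ l₂ : Fin m,
        (η ^ l₁ * η ^ (l₂ : ℕ) / ((m : ℂ) * η ^ l) *
          ∑ j ∈ Finset.range m, ζ ^ (l * j) * ((ζ ^ (l₁ * j))⁻¹ * (ζ ^ ((l₂ : ℕ) * j))⁻¹)) *
            S l₁ x₁ * S (l₂ : ℕ) x₂) =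
      ∑ l₂ ∈ Finset.range m,
        (η ^ l₁ * η ^ l₂ / ((m : ℂ) * η ^ l) *
          ∑ j ∈ Finset.range m, ζ ^ (l * j) * ((ζ ^ (l₁ * j))⁻¹ * (ζ ^ (l₂ * j))⁻¹)) *
            S l₁ x₁ * S l₂ x₂ := by
    intro l₁ _
    exact Fin.sum_univ_eq_sum_range (fun l₂ => (η ^ l₁ * η ^ l₂ / ((m : ℂ) * η ^ l) *
      ∑ j ∈ Finset.range m, ζ ^ (l * j) * ((ζ ^ (l₁ * j))⁻¹ * (ζ ^ (l₂ * j))⁻¹)) *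
        S l₁ x₁ * S l₂ x₂) m
  rw [Finset.sum_congr rfl hR]
  -- now everything over ranges; expand the LHS
  rw [hS]
  have hL : ∀ j ∈ Finset.range m,
      ζ ^ (l * j) * Complex.exp (η * ζ ^ j * (x₁ + x₂)) =
        ∑ l₁ ∈ Finset.range m, ∑ l₂ ∈ Finset.range m,
          ζ ^ (l * j) * (η ^ l₁ * (ζ ^ (l₁ * j))⁻¹ * S l₁ x₁) *
            (η ^ l₂ * (ζ ^ (l₂ * j))⁻¹ * S l₂ x₂) := by
    intro j hj
    have : Complex.exp (η * ζ ^ j * (x₁ + x₂)) =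
        Complex.exp (η * ζ ^ j * x₁) * Complex.exp (η * ζ ^ j * x₂) := by
      rw [← Complex.exp_add]; ring_nf
    rw [this, inv j hj x₁, inv j hj x₂, Finset.sum_mul_sum]
    simp only [Finset.mul_sum]
    apply Finset.sum_congr rfl
    intro l₁ _
    apply Finset.sum_congr rfl
    intro l₂ _
    ring
  rw [Finset.sum_congr rfl hL, Finset.sum_comm]
  rw [Finset.mul_sum]
  apply Finset.sum_congr rfl
  intro l₁ _
  rw [Finset.sum_comm, Finset.mul_sum]
  apply Finset.sum_congr rfl
  intro l₂ _
  simp only [Finset.mul_sum, Finset.sum_mul]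
  apply Finset.sum_congr rfl
  intro j _
  ring
end

section
/- Let P be a monic complex polynomial of degree m ≥ 1 with roots r₁,...,r_m (with multiplicity), and define T_{l,j} = Σ r_{s₁}···r_{s_l} summed over all l-element subsets {s₁,...,s_l} of {1,...,m} containing j (with T_{0,j} = 1). Define S_l(x) = Σ_{j=1}^m T_{l,j} e^{-i r_j x}. Then each S_l is an entire function whose Taylor coefficient b_k at 0 satisfies: k! b_k lies in the ring ℤ[i, a₀, a₁, ..., a_{m-1}] generated by i and the coefficients of P. -/
/-!
Differentiating `S_l` termwise gives `iteratedDeriv k S_l 0 = (-i)^k ∑_j T_{l,j} r_j^k`. The sum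
`∑_j T_{l,j} r_j^k` is the value at the roots of a symmetric polynomial with integer coefficients
(a power sum for `l = 0`), hence by the fundamental theorem of symmetric polynomials an integer
polynomial in the elementary symmetric functions of the roots, which by Vieta are `±` the
coefficients of `P`.
-/

open Finset MvPolynomial

namespace MvPolynomial

variable (σ R : Type*) [Fintype σ] [CommSemiring R]

/-- `∑_j T_{l,j} X_j^k`, regrouped as a sum over `l`-subsets so that its symmetry is evident. -/
noncomputable def weightedPsum (l k : ℕ) : MvPolynomial σ R :=
  ∑ t ∈ powersetCard l univ, (∏ i ∈ t, X i) * ∑ j ∈ t, X j ^ k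

variable {σ R}

theorem rename_weightedPsum {τ : Type*} [Fintype τ] (e : σ ≃ τ) (l k : ℕ) :
    rename e (weightedPsum σ R l k) = weightedPsum τ R l k :=
  calc rename e (weightedPsum σ R l k)
      = ∑ t ∈ powersetCard l univ, (∏ i ∈ t, X (e i)) * ∑ j ∈ t, X (e j) ^ k := by
        simp_rw [weightedPsum, map_sum, map_mul, map_prod, map_sum, map_pow, rename_X]
    _ = ∑ t ∈ powersetCard l (univ.map e.toEmbedding), (∏ i ∈ t, X i) * ∑ j ∈ t, X j ^ k := by
        simp [powersetCard_map, -map_univ_equiv, (mapEmbedding_apply)]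
    _ = weightedPsum τ R l k := by rw [map_univ_equiv, weightedPsum]

theorem weightedPsum_isSymmetric (l k : ℕ) : (weightedPsum σ R l k).IsSymmetric :=
  fun e => rename_weightedPsum e l k

theorem aeval_weightedPsum [DecidableEq σ] {A : Type*} [CommSemiring A] [Algebra R A]
    (x : σ → A) (l k : ℕ) :
    aeval x (weightedPsum σ R l k) =
      ∑ j, (∑ t ∈ powersetCard l univ with j ∈ t, ∏ i ∈ t, x i) * x j ^ k := by
  simp_rw [weightedPsum, map_sum, map_mul, map_prod, map_sum, map_pow, aeval_X, mul_sum, sum_mul]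
  exact sum_comm' (by simp [and_comm])

variable {ι A : Type*} [Fintype ι] [CommRing A]

theorem aeval_mem_closure_esymm_of_isSymmetric {p : MvPolynomial ι ℤ} (hp : p.IsSymmetric)
    (x : ι → A) :
    aeval x p ∈ Subring.closure (Set.range fun d => aeval x (esymm ι ℤ d)) := by
  obtain ⟨q, hq⟩ := esymmAlgHom_surjective ℤ (le_refl (Fintype.card ι)) ⟨p, hp⟩
  have hp_eq : p = aeval (fun i : Fin (Fintype.card ι) => esymm ι ℤ (i + 1)) q := by
    rw [← esymmAlgHom_apply, hq]
  rw [hp_eq, ← AlgHom.comp_apply, comp_aeval]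
  exact eval₂_mem (fun _ _ => intCast_mem _ _) fun i => Subring.subset_closure ⟨_, rfl⟩

theorem aeval_esymm_mem_closure_coeff (r : ι → A) (d : ℕ) :
    aeval r (esymm ι ℤ d) ∈
      Subring.closure (Set.range (∏ i, (Polynomial.X - Polynomial.C (r i))).coeff) := by
  set s := univ.val.map r
  have hprod : ∏ i, (Polynomial.X - Polynomial.C (r i)) =
      (s.map fun t => Polynomial.X - Polynomial.C t).prod := by
    rw [prod_eq_multiset_prod, Multiset.map_map]; rfl
  rw [aeval_esymm_eq_multiset_esymm, hprod]
  by_cases hd : d ≤ Multiset.card s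
  · have hcoeff := Multiset.prod_X_sub_C_coeff s (Nat.sub_le _ d)
    rw [Nat.sub_sub_self hd] at hcoeff
    have hesymm : s.esymm d = (-1) ^ d *
        (s.map fun t => Polynomial.X - Polynomial.C t).prod.coeff (Multiset.card s - d) := by
      rw [hcoeff, ← mul_assoc, ← mul_pow, neg_one_mul, neg_neg, one_pow, one_mul]
    rw [hesymm]
    exact mul_mem (pow_mem (neg_mem (one_mem _)) d) (Subring.subset_closure ⟨_, rfl⟩)
  · rw [Multiset.esymm, Multiset.powersetCard_eq_empty _ (not_le.mp hd)]
    exact zero_mem _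

end MvPolynomial

theorem Polynomial.coeff_X_pow_add_sum_mem_closure {A : Type*} [CommRing A] (m : ℕ) (a : ℕ → A)
    (n : ℕ) :
    (X ^ m + ∑ i ∈ range m, C (a i) * X ^ i).coeff n ∈ Subring.closure (a '' Set.Iio m) := by
  simp only [coeff_add, coeff_X_pow, finsetSum_coeff, coeff_C_mul, mul_ite, mul_one, mul_zero,
    sum_ite_eq, mem_range]
  refine add_mem ?_ ?_
  · split_ifs
    exacts [one_mem _, zero_mem _]
  · split_ifs with h
    exacts [Subring.subset_closure ⟨n, h, rfl⟩, zero_mem _]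

theorem iteratedDeriv_sum_mul_cexp {ι : Type*} (s : Finset ι) (c w : ι → ℂ) (k : ℕ) :
    iteratedDeriv k (fun x => ∑ j ∈ s, c j * Complex.exp (w j * x)) =
      fun x => ∑ j ∈ s, c j * w j ^ k * Complex.exp (w j * x) := by
  funext x
  rw [iteratedDeriv_fun_sum fun j _ => by fun_prop]
  simp [mul_assoc]

theorem gen_trig_taylor_coeffs_general (m : ℕ) (r : Fin m → ℂ) (a : ℕ → ℂ)
    (hP : ∀ x : ℂ, ∏ j, (x - r j) = x ^ m + ∑ i ∈ Finset.range m, a i * x ^ i)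
    (T : ℕ → Fin m → ℂ)
    (hT0 : ∀ j, T 0 j = 1)
    (hT : ∀ l, 1 ≤ l → ∀ j, T l j =
      ∑ s ∈ Finset.univ.powersetCard l with j ∈ s, ∏ i ∈ s, r i)
    (S : ℕ → ℂ → ℂ)
    (hS : ∀ l x, S l x = ∑ j, T l j * Complex.exp (-Complex.I * r j * x)) :
    ∀ l, l ≤ m - 1 →
      (Differentiable ℂ (S l) ∧ AnalyticOn ℂ (S l) Set.univ) ∧
      ∀ k : ℕ, iteratedDeriv k (S l) 0 ∈
        Subring.closure (insert Complex.I (a '' Set.Iio m)) := by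
  intro l _
  have hSl : S l = fun x => ∑ j, T l j * Complex.exp (-Complex.I * r j * x) := funext (hS l)
  have hdiff : Differentiable ℂ (S l) := by rw [hSl]; fun_prop
  refine ⟨⟨hdiff, hdiff.differentiableOn.analyticOn isOpen_univ⟩, fun k => ?_⟩
  have hderiv : iteratedDeriv k (S l) 0 = (-Complex.I) ^ k * ∑ j, T l j * r j ^ k := by
    rw [hSl, iteratedDeriv_sum_mul_cexp, mul_sum]
    simp only [mul_zero, Complex.exp_zero, mul_one, mul_pow]
    exact sum_congr rfl fun j _ => by ring
  obtain ⟨p, hp, hpr⟩ : ∃ p : MvPolynomial (Fin m) ℤ, p.IsSymmetric ∧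
      aeval r p = ∑ j, T l j * r j ^ k := by
    rcases Nat.eq_zero_or_pos l with rfl | hl
    · exact ⟨psum _ ℤ k, psum_isSymmetric _ ℤ k, by simp [psum, hT0]⟩
    · exact ⟨weightedPsum _ ℤ l k, weightedPsum_isSymmetric l k,
        by simp [aeval_weightedPsum, hT l hl]⟩
  have hroots : ∏ j, (Polynomial.X - Polynomial.C (r j)) =
      Polynomial.X ^ m + ∑ i ∈ range m, Polynomial.C (a i) * Polynomial.X ^ i :=
    Polynomial.funext fun x => by simpa [Polynomial.eval_prod, Polynomial.eval_finsetSum] using hP x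
  have hesymm : Subring.closure (Set.range fun d => aeval r (esymm (Fin m) ℤ d)) ≤
      Subring.closure (insert Complex.I (a '' Set.Iio m)) := by
    refine Subring.closure_le.mpr (Set.range_subset_iff.mpr fun d => ?_)
    refine Subring.closure_le.mpr ?_ (aeval_esymm_mem_closure_coeff r d)
    rintro _ ⟨n, rfl⟩
    rw [hroots]
    exact Subring.closure_mono (Set.subset_insert _ _)
      (Polynomial.coeff_X_pow_add_sum_mem_closure m a n)
  rw [hderiv, ← hpr]
  exact mul_mem (pow_mem (neg_mem (Subring.subset_closure (Set.mem_insert _ _))) k)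
    (hesymm (aeval_mem_closure_esymm_of_isSymmetric hp r))

theorem gen_trig_taylor_coeffs (m : ℕ) (hm : 1 ≤ m) (r : Fin m → ℂ) (a : ℕ → ℂ)
    (hP : ∀ x : ℂ, ∏ j, (x - r j) = x ^ m + ∑ i ∈ Finset.range m, a i * x ^ i)
    (T : ℕ → Fin m → ℂ)
    (hT0 : ∀ j, T 0 j = 1)
    (hT : ∀ l, 1 ≤ l → ∀ j, T l j =
      ∑ s ∈ Finset.univ.powersetCard l with j ∈ s, ∏ i ∈ s, r i)
    (S : ℕ → ℂ → ℂ)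
    (hS : ∀ l x, S l x = ∑ j, T l j * Complex.exp (-Complex.I * r j * x)) :
    ∀ l, l ≤ m - 1 →
      (Differentiable ℂ (S l) ∧ AnalyticOn ℂ (S l) Set.univ) ∧
      ∀ k : ℕ, iteratedDeriv k (S l) 0 ∈
        Subring.closure (insert Complex.I (a '' Set.Iio m)) :=
  gen_trig_taylor_coeffs_general m r a hP T hT0 hT S hS
end

section
/- Let P be a monic complex polynomial of degree m ≥ 2 with roots r₁,...,r_m and coefficients P(x) = x^m + a_{m-1}x^{m-1} + ... + a₀. With T_{l,j} defined as the sum of products of l roots including r_j, and S_l(x) = Σ_{j=1}^m T_{l,j} e^{-i r_j x}, the derivatives satisfy: S_0' = -i S_1; S_l' = (-1)^{l+1} i a_{m-l} S_1 + i S_{l+1} for 0 < l < m-1; and S_{m-1}' = (-1)^m i a_1 S_1 + (-1)^m i a_0 S_0. -/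
open Finset Polynomial Complex

/-! Differentiating termwise, `S_l' = ∑ⱼ (-i rⱼ T_{l,j}) e^{-i rⱼ x}`, so each equation reduces
to an identity between coefficients. Splitting off `j` from the `(l+1)`-subsets containing it gives
`T_{l+1,j} = rⱼ (e_l - T_{l,j})` with `e_l` the `l`-th elementary symmetric function of the roots,
Vieta's formulas give `e_l = (-1)^l a_{m-l}`, and `T_{m,j} = e_m` since the only `m`-subset is
everything. -/

section PowersetCard

variable {ι R : Type*} [DecidableEq ι]

theorem sum_powersetCard_succ_filter_mem_prod [CommSemiring R] (r : ι → R) {t : Finset ι}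
    {j : ι} (hj : j ∈ t) (l : ℕ) :
    ∑ s ∈ t.powersetCard (l + 1) with j ∈ s, ∏ i ∈ s, r i =
      r j * ∑ s ∈ t.powersetCard l with j ∉ s, ∏ i ∈ s, r i := by
  rw [mul_sum]
  refine sum_nbij' (fun s ↦ s.erase j) (insert j) ?_ ?_ ?_ ?_ ?_
  · intro s hs
    simp only [mem_filter, mem_powersetCard] at hs ⊢
    refine ⟨⟨(erase_subset j s).trans hs.1.1, ?_⟩, notMem_erase j s⟩
    rw [card_erase_of_mem hs.2, hs.1.2, Nat.add_sub_cancel]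
  · intro s hs
    simp only [mem_filter, mem_powersetCard] at hs ⊢
    refine ⟨⟨insert_subset hj hs.1.1, ?_⟩, mem_insert_self j s⟩
    rw [card_insert_of_notMem hs.2, hs.1.2]
  · intro s hs
    exact insert_erase (mem_filter.mp hs).2
  · intro s hs
    exact erase_insert (mem_filter.mp hs).2
  · intro s hs
    exact (mul_prod_erase s r (mem_filter.mp hs).2).symm

theorem sum_powersetCard_succ_filter_mem_prod_eq_mul_sub [CommRing R] (r : ι → R)
    {t : Finset ι} {j : ι} (hj : j ∈ t) (l : ℕ) :
    ∑ s ∈ t.powersetCard (l + 1) with j ∈ s, ∏ i ∈ s, r i =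
      r j * (∑ s ∈ t.powersetCard l, ∏ i ∈ s, r i -
        ∑ s ∈ t.powersetCard l with j ∈ s, ∏ i ∈ s, r i) := by
  rw [sum_powersetCard_succ_filter_mem_prod r hj,
    ← sum_filter_add_sum_filter_not (t.powersetCard l) (j ∈ ·), add_sub_cancel_left]

theorem sum_powersetCard_one_filter_mem_prod [CommSemiring R] (r : ι → R) {t : Finset ι}
    {j : ι} (hj : j ∈ t) :
    ∑ s ∈ t.powersetCard 1 with j ∈ s, ∏ i ∈ s, r i = r j := by
  simp [sum_powersetCard_succ_filter_mem_prod r hj 0, powersetCard_zero, filter_singleton]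

theorem filter_mem_powersetCard_card {t : Finset ι} {j : ι} (hj : j ∈ t) :
    {s ∈ t.powersetCard #t | j ∈ s} = t.powersetCard #t := by
  simp [powersetCard_self, filter_singleton, hj]

end PowersetCard

theorem Finset.prod_X_sub_C_coeff {ι R : Type*} [CommRing R] (s : Finset ι) (r : ι → R)
    {k : ℕ} (hk : k ≤ #s) :
    (∏ i ∈ s, (X - C (r i))).coeff k =
      (-1) ^ (#s - k) * ∑ t ∈ s.powersetCard (#s - k), ∏ i ∈ t, r i := by
  have h := Multiset.prod_X_sub_C_coeff (s.val.map r) (k := k) (by simpa using hk)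
  rwa [Multiset.map_map, Multiset.card_map, esymm_map_val] at h

theorem coeff_eq_neg_one_pow_mul_sum_powersetCard_prod {R : Type*} [CommRing R] [IsDomain R]
    [Infinite R] {m : ℕ} (r : Fin m → R) (a : ℕ → R)
    (hP : ∀ x, ∏ j, (x - r j) = x ^ m + ∑ i ∈ range m, a i * x ^ i) {k : ℕ} (hk : k < m) :
    a k = (-1) ^ (m - k) * ∑ s ∈ univ.powersetCard (m - k), ∏ i ∈ s, r i := by
  have hpoly : ∏ j, (X - C (r j)) = X ^ m + ∑ i ∈ range m, C (a i) * X ^ i :=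
    Polynomial.funext fun x ↦ by simpa [eval_prod, eval_finsetSum] using hP x
  have hcoeff := congrArg (coeff · k) hpoly
  simp only [coeff_add, coeff_X_pow, finsetSum_coeff, coeff_C_mul, mul_ite, mul_one, mul_zero,
    sum_ite_eq, mem_range, hk, if_true, if_neg hk.ne, zero_add] at hcoeff
  simpa [hcoeff] using Finset.prod_X_sub_C_coeff univ r (k := k) (by simpa using hk.le)

section ExpSum

variable {ι : Type*} [Fintype ι] (r : ι → ℂ)

theorem hasDerivAt_sum_mul_cexp (c : ι → ℂ) (x : ℂ) :
    HasDerivAt (fun y ↦ ∑ j, c j * cexp (-I * r j * y))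
      (∑ j, -I * r j * c j * cexp (-I * r j * x)) x := by
  refine HasDerivAt.fun_sum fun j _ ↦ ?_
  have h := ((hasDerivAt_id x).const_mul (-I * r j)).cexp.const_mul (c j)
  simp only [id, mul_one] at h
  exact h.congr_deriv (by ring)

theorem hasDerivAt_of_forall_mul_coeff_eq {T : ℕ → ι → ℂ} {S : ℕ → ℂ → ℂ}
    (hS : ∀ l x, S l x = ∑ j, T l j * cexp (-I * r j * x)) {l p q : ℕ} {α β : ℂ}
    (hcoeff : ∀ j, -I * r j * T l j = α * T p j + β * T q j) (x : ℂ) :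
    HasDerivAt (S l) (α * S p x + β * S q x) x := by
  rw [show S l = _ from funext (hS l)]
  convert hasDerivAt_sum_mul_cexp r (T l) x using 1
  simp only [hS, hcoeff, mul_sum, ← sum_add_distrib]
  exact sum_congr rfl fun j _ ↦ by ring

end ExpSum

theorem gen_trig_deriv_system (m : ℕ) (hm : 2 ≤ m) (r : Fin m → ℂ) (a : ℕ → ℂ)
    (hP : ∀ x : ℂ, ∏ j, (x - r j) = x ^ m + ∑ i ∈ Finset.range m, a i * x ^ i)
    (T : ℕ → Fin m → ℂ)
    (hT0 : ∀ j, T 0 j = 1)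
    (hT : ∀ l, 1 ≤ l → ∀ j, T l j =
      ∑ s ∈ Finset.univ.powersetCard l with j ∈ s, ∏ i ∈ s, r i)
    (S : ℕ → ℂ → ℂ)
    (hS : ∀ l x, S l x = ∑ j, T l j * Complex.exp (-Complex.I * r j * x)) :
    (∀ x : ℂ, HasDerivAt (S 0) (-Complex.I * S 1 x) x) ∧
    (∀ l, 0 < l → l < m - 1 → ∀ x : ℂ,
      HasDerivAt (S l)
        ((-1) ^ (l + 1) * Complex.I * a (m - l) * S 1 x + Complex.I * S (l + 1) x) x) ∧
    (∀ x : ℂ, HasDerivAt (S (m - 1))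
      ((-1) ^ m * Complex.I * a 1 * S 1 x + (-1) ^ m * Complex.I * a 0 * S 0 x) x) := by
  set E : ℕ → ℂ := fun l ↦ ∑ s ∈ univ.powersetCard l, ∏ i ∈ s, r i
  have hT1 (j) : T 1 j = r j := by
    rw [hT 1 le_rfl, sum_powersetCard_one_filter_mem_prod r (mem_univ j)]
  have hTsucc (l) (hl : 1 ≤ l) (j) : T (l + 1) j = r j * (E l - T l j) := by
    rw [hT _ (by omega), hT l hl, sum_powersetCard_succ_filter_mem_prod_eq_mul_sub r (mem_univ j)]
  have hTm (j) : T m j = E m := by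
    rw [hT m (by omega)]
    have hfilter := filter_mem_powersetCard_card (mem_univ j)
    simpa using congrArg (∑ s ∈ ·, ∏ i ∈ s, r i) hfilter
  have hE (l) (hl0 : 0 < l) (hlm : l ≤ m) : E l = (-1) ^ l * a (m - l) := by
    have h := coeff_eq_neg_one_pow_mul_sum_powersetCard_prod r a hP (k := m - l) (by omega)
    rw [Nat.sub_sub_self hlm] at h
    rw [h, ← mul_assoc, ← mul_pow]
    norm_num [E]
  obtain ⟨n, rfl⟩ : ∃ n, m = n + 2 := ⟨m - 2, by omega⟩
  refine ⟨fun x ↦ ?_, fun l hl0 hlm x ↦ ?_, fun x ↦ ?_⟩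
  · simpa using hasDerivAt_of_forall_mul_coeff_eq r hS (α := -I) (β := 0) (p := 1) (q := 1)
      (fun j ↦ by rw [hT0, hT1]; ring) x
  · refine hasDerivAt_of_forall_mul_coeff_eq r hS (fun j ↦ ?_) x
    rw [hT1, hTsucc l hl0, hE l hl0 (by omega)]
    ring
  · refine hasDerivAt_of_forall_mul_coeff_eq r hS (fun j ↦ ?_) x
    have hlast := hTsucc (n + 1) (by omega) j
    rw [hTm, hE (n + 2) (by omega) le_rfl, hE (n + 1) (by omega) (by omega)] at hlast
    simp only [Nat.sub_self, show n + 2 - (n + 1) = 1 by omega,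
      show n + 2 - 1 = n + 1 by omega] at hlast ⊢
    rw [hT0, hT1]
    linear_combination (-I) * hlast
end

section
/- Let m ≥ 2 and let f₀,...,f_{m-1}: ℂ → ℂ be differentiable functions satisfying f_l' = f_{l+1} for 0 ≤ l ≤ m-2 and f_{m-1}' = λ f₀ for some nonzero λ ∈ ℂ. Let M(x) be the m×m matrix with entries M_{pq}(x) = f_{p+q}(x) for p+q ≤ m-1 and M_{pq}(x) = λ f_{p+q-m}(x) for p+q ≥ m (0 ≤ p,q ≤ m-1). Then det M(x) is constant in x. -/
/-!
Extend the chain to `F k` for `k < 2m` by `F (k + m) = λ F k`; then `M p q = F (p + q)` and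
`F k' = F (k + 1)` throughout. Hence column `q` of `M'` is column `q + 1` of `M` for `q < m - 1`
and `λ` times column `0` for `q = m - 1`. Expanding `(det M)'` column by column (Jacobi's
formula), every term is the determinant of `M` with one column replaced by a multiple of a
different column, so it vanishes.
-/

open Finset

namespace Matrix

variable {𝕜 𝔸 n : Type*} [NontriviallyNormedField 𝕜] [NormedCommRing 𝔸] [NormedAlgebra 𝕜 𝔸]
  [Fintype n] [DecidableEq n]

theorem hasDerivAt_det {M : 𝕜 → Matrix n n 𝔸} {M' : Matrix n n 𝔸} {x : 𝕜}
    (h : ∀ i j, HasDerivAt (fun t => M t i j) (M' i j) x) :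
    HasDerivAt (fun t => (M t).det) (∑ j, ((M x).updateCol j fun i => M' i j).det) x := by
  simp only [det_apply']
  have hterm (σ : Equiv.Perm n) :=
    (HasDerivAt.fun_finsetProd (u := univ) fun j _ => h (σ j) j).const_mul
      ((Equiv.Perm.sign σ : ℤ) : 𝔸)
  refine (HasDerivAt.fun_sum (u := univ) fun σ _ => hterm σ).congr_deriv ?_
  rw [sum_comm]
  refine sum_congr rfl fun σ _ => ?_
  rw [mul_sum]
  refine sum_congr rfl fun j _ => ?_
  rw [← mul_prod_erase univ _ (mem_univ j), updateCol_self, smul_eq_mul, mul_comm (M' (σ j) j),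
    prod_congr rfl fun k hk => updateCol_ne (ne_of_mem_erase hk)]

theorem hasDerivAt_det_eq_zero_of_derivCol_eq_smul_col {M : 𝕜 → Matrix n n 𝔸}
    {M' : Matrix n n 𝔸} {x : 𝕜} (h : ∀ i j, HasDerivAt (fun t => M t i j) (M' i j) x)
    (hcol : ∀ j, ∃ k ≠ j, ∃ c : 𝔸, ∀ i, M' i j = c * M x i k) :
    HasDerivAt (fun t => (M t).det) 0 x := by
  convert hasDerivAt_det h using 1
  refine (sum_eq_zero fun j _ => ?_).symm
  obtain ⟨k, hkj, c, hc⟩ := hcol j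
  rw [show (fun i => M' i j) = c • fun i => M x i k from funext hc, det_updateCol_smul,
    det_updateCol_eq_zero hkj, mul_zero]

end Matrix

def twistedExtension {α β : Type*} [Mul β] (m : ℕ) (lam : β) (f : ℕ → α → β) (k : ℕ) (x : α) :
    β :=
  if k ≤ m - 1 then f k x else lam * f (k - m) x

theorem twistedExtension_add_self {α β : Type*} [Mul β] {m k : ℕ} (hk : k < m) (lam : β)
    (f : ℕ → α → β) (x : α) :
    twistedExtension m lam f (k + m) x = lam * twistedExtension m lam f k x := by
  simp [twistedExtension, show k ≤ m - 1 by omega, show ¬ k + m ≤ m - 1 by omega]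

section Hankel

variable {𝕜 𝔸 : Type*} [NontriviallyNormedField 𝕜] [NormedCommRing 𝔸] [NormedAlgebra 𝕜 𝔸]

theorem hasDerivAt_det_hankel_eq_zero {m : ℕ} (hm : 2 ≤ m) {g : ℕ → 𝕜 → 𝔸} {lam : 𝔸} {x : 𝕜}
    (hderiv : ∀ k, k + 1 < 2 * m → HasDerivAt (g k) (g (k + 1) x) x)
    (htwist : ∀ k < m, g (k + m) x = lam * g k x) :
    HasDerivAt (fun t => (Matrix.of fun p q : Fin m => g (p + q) t).det) 0 x := by
  refine Matrix.hasDerivAt_det_eq_zero_of_derivCol_eq_smul_col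
    (M' := Matrix.of fun p q : Fin m => g (p + q + 1) x) (fun p q => hderiv _ (by omega)) ?_
  intro q
  by_cases hq : (q : ℕ) + 1 < m
  · exact ⟨⟨q + 1, hq⟩, Fin.ne_of_val_ne (by simp), 1, fun p => by simp [add_assoc]⟩
  · refine ⟨⟨0, by omega⟩, Fin.ne_of_val_ne (by simp; omega), lam, fun p => ?_⟩
    simp only [Matrix.of_apply, add_zero]
    rw [← htwist p p.isLt]
    congr 1
    omega

theorem hasDerivAt_twistedExtension {m : ℕ} {f : ℕ → 𝕜 → 𝔸} {lam : 𝔸} {x : 𝕜}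
    (hderiv : ∀ l, l ≤ m - 2 → HasDerivAt (f l) (f (l + 1) x) x)
    (hlast : HasDerivAt (f (m - 1)) (lam * f 0 x) x) {k : ℕ} (hk : k + 1 < 2 * m) :
    HasDerivAt (twistedExtension m lam f k) (twistedExtension m lam f (k + 1) x) x := by
  unfold twistedExtension
  rcases lt_trichotomy (k + 1) m with hlt | heq | hgt
  · simpa [show k ≤ m - 1 by omega, show k + 1 ≤ m - 1 by omega] using hderiv k (by omega)
  · obtain rfl : k = m - 1 := by omega
    simpa [show ¬ m ≤ m - 1 by omega, show m - 1 + 1 = m by omega] using hlast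
  · simp only [show ¬ k ≤ m - 1 by omega, show ¬ k + 1 ≤ m - 1 by omega, if_false,
      show k + 1 - m = k - m + 1 by omega]
    exact (hderiv (k - m) (by omega)).const_mul lam

end Hankel

theorem twisted_hankel_det_const_general (m : ℕ) (hm : 2 ≤ m)
    (f : ℕ → ℂ → ℂ) (lam : ℂ)
    (hderiv : ∀ l, l ≤ m - 2 → ∀ x : ℂ, HasDerivAt (f l) (f (l + 1) x) x)
    (hlast : ∀ x : ℂ, HasDerivAt (f (m - 1)) (lam * f 0 x) x)
    (M : ℂ → Matrix (Fin m) (Fin m) ℂ)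
    (hM : ∀ x (p q : Fin m), M x p q =
      if (p : ℕ) + (q : ℕ) ≤ m - 1 then f ((p : ℕ) + (q : ℕ)) x
      else lam * f ((p : ℕ) + (q : ℕ) - m) x) :
    ∀ x y : ℂ, (M x).det = (M y).det := by
  have hM' : M = fun x => Matrix.of fun p q : Fin m => twistedExtension m lam f (p + q) x :=
    funext fun x => Matrix.ext (hM x)
  have hdet (x : ℂ) : HasDerivAt (fun t => (M t).det) 0 x := by
    rw [hM']
    exact hasDerivAt_det_hankel_eq_zero hm
      (fun k hk => hasDerivAt_twistedExtension (fun l hl => hderiv l hl x) (hlast x) hk)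
      (fun k hk => twistedExtension_add_self hk lam f x)
  exact is_const_of_deriv_eq_zero (fun x => (hdet x).differentiableAt) fun x => (hdet x).deriv

theorem twisted_hankel_det_const (m : ℕ) (hm : 2 ≤ m)
    (f : ℕ → ℂ → ℂ) (lam : ℂ) (hlam : lam ≠ 0)
    (hderiv : ∀ l, l ≤ m - 2 → ∀ x : ℂ, HasDerivAt (f l) (f (l + 1) x) x)
    (hlast : ∀ x : ℂ, HasDerivAt (f (m - 1)) (lam * f 0 x) x)
    (M : ℂ → Matrix (Fin m) (Fin m) ℂ)
    (hM : ∀ x (p q : Fin m), M x p q =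
      if (p : ℕ) + (q : ℕ) ≤ m - 1 then f ((p : ℕ) + (q : ℕ)) x
      else lam * f ((p : ℕ) + (q : ℕ) - m) x) :
    ∀ x y : ℂ, (M x).det = (M y).det :=
  twisted_hankel_det_const_general m hm f lam hderiv hlast M hM
end
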